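/- arXiv:2511.01484 — 2 statements merged into one kernel-verified Lean document; each statement's English description precedes it below -/
import Mathlib

section
/- Let b > 0, m > 0, Ω ≥ 0, and let s be a real number with s > −2. Then ∫_0^∞ x^{s/2} · (2bm/(2bm+Ω))^m · (exp(−x/(2b))/(2b)) · Σ_{k=0}^∞ ((m)_k/(k!)²) · (Ω x/(2b(2bm+Ω)))^k dx = (2bm/(2bm+Ω))^m · (2b)^{s/2} · Γ(s/2 + 1) · Σ_{k=0}^∞ ((s/2 + 1)_k (m)_k/(k!)²) · (Ω/(2bm+Ω))^k, where both series converge and (a)_k = a(a+1)⋯(a+k−1) denotes the Pochhammer rising factorial. -/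
/-! Expand `₁F₁` and integrate term by term: the `k`-th term is the Gamma integral
`∫₀^∞ x^{s/2+k} e^{-x/(2b)} dx = (2b)^{s/2+k+1} Γ(s/2+1+k)`, and `Γ(s/2+1+k) = (s/2+1)_k Γ(s/2+1)`
turns the resulting series into `₂F₁` at `Ω/(2bm+Ω) < 1`. Since summability in `ℝ` is absolute,
the convergence of that series already justifies exchanging sum and integral. -/

open Real MeasureTheory

/-- The Pochhammer rising factorial `(a)_k = a(a+1)⋯(a+k−1)` for a real number `a`. -/
noncomputable def pochhammer' (a : ℝ) : ℕ → ℝ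
  | 0 => 1
  | k + 1 => pochhammer' a k * (a + k)

open Filter Topology Set

lemma Gamma_add_nat_eq_pochhammer'_mul {a : ℝ} (ha : ∀ j : ℕ, a ≠ -j) :
    ∀ k : ℕ, Gamma (a + k) = pochhammer' a k * Gamma a
  | 0 => by simp [pochhammer']
  | k + 1 => by
    have hk : a + k ≠ 0 := fun h => ha k (eq_neg_of_add_eq_zero_left h)
    rw [Nat.cast_succ, ← add_assoc, Gamma_add_one hk, Gamma_add_nat_eq_pochhammer'_mul ha k,
      pochhammer']
    ring

lemma integral_rpow_mul_exp_neg_div_Ioi {p r : ℝ} (hp : -1 < p) (hr : 0 < r) :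
    ∫ x in Ioi (0 : ℝ), x ^ p * exp (-x / r) = r ^ (p + 1) * Gamma (p + 1) := by
  have h := integral_rpow_mul_exp_neg_mul_Ioi (a := p + 1) (by linarith) (inv_pos.2 hr)
  simp_rw [add_sub_cancel_right, one_div, inv_inv, inv_mul_eq_div, ← neg_div] at h
  exact h

lemma integrableOn_rpow_mul_exp_neg_div_Ioi {p r : ℝ} (hp : -1 < p) (hr : 0 < r) :
    IntegrableOn (fun x : ℝ => x ^ p * exp (-x / r)) (Ioi 0) := by
  -- the Bochner integral of a non-integrable function is `0`
  refine .of_integral_ne_zero ?_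
  have := Gamma_pos_of_pos (show 0 < p + 1 by linarith)
  rw [integral_rpow_mul_exp_neg_div_Ioi hp hr]
  positivity

lemma integral_rpow_add_nat_mul_exp_neg_div_Ioi {p r : ℝ} (hp : -1 < p) (hr : 0 < r) (k : ℕ) :
    ∫ x in Ioi (0 : ℝ), x ^ (p + k) * exp (-x / r) =
      r ^ (p + 1) * Gamma (p + 1) * (pochhammer' (p + 1) k * r ^ k) := by
  have hk : (0 : ℝ) ≤ k := Nat.cast_nonneg k
  rw [integral_rpow_mul_exp_neg_div_Ioi (by linarith) hr, add_right_comm,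
    Gamma_add_nat_eq_pochhammer'_mul fun j => by linarith [(Nat.cast_nonneg j : (0 : ℝ) ≤ j)],
    rpow_add hr, rpow_natCast]
  ring

theorem integral_rpow_mul_exp_neg_div_mul_tsum {p r : ℝ} (hp : -1 < p) (hr : 0 < r)
    {a : ℕ → ℝ} (ha : Summable fun k : ℕ => a k * pochhammer' (p + 1) k * r ^ k) :
    ∫ x in Ioi (0 : ℝ), x ^ p * exp (-x / r) * ∑' k : ℕ, a k * x ^ k =
      r ^ (p + 1) * Gamma (p + 1) * ∑' k : ℕ, a k * pochhammer' (p + 1) k * r ^ k := by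
  set F : ℕ → ℝ → ℝ := fun k x => a k * (x ^ (p + k) * exp (-x / r))
  have hF (k : ℕ) : IntegrableOn (F k) (Ioi 0) :=
    (integrableOn_rpow_mul_exp_neg_div_Ioi (by linarith [(Nat.cast_nonneg k : (0 : ℝ) ≤ k)])
      hr).const_mul _
  have hF_integral (k : ℕ) : ∫ x in Ioi (0 : ℝ), F k x =
      r ^ (p + 1) * Gamma (p + 1) * (a k * pochhammer' (p + 1) k * r ^ k) := by
    rw [integral_const_mul, integral_rpow_add_nat_mul_exp_neg_div_Ioi hp hr]
    ring
  have hF_norm (k : ℕ) : ∫ x in Ioi (0 : ℝ), ‖F k x‖ = ‖∫ x in Ioi (0 : ℝ), F k x‖ := by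
    have hg : ∀ x ∈ Ioi (0 : ℝ), 0 ≤ x ^ (p + k) * exp (-x / r) := fun x hx =>
      mul_nonneg (rpow_nonneg (le_of_lt hx) _) (exp_pos _).le
    rw [integral_const_mul, norm_mul, Real.norm_of_nonneg (setIntegral_nonneg measurableSet_Ioi hg),
      ← integral_const_mul]
    refine setIntegral_congr_fun measurableSet_Ioi fun x hx => ?_
    rw [norm_mul, Real.norm_of_nonneg (hg x hx)]
  have hF_summable : Summable fun k => ∫ x in Ioi (0 : ℝ), ‖F k x‖ := by
    simp_rw [hF_norm, hF_integral]
    exact summable_norm_iff.2 (ha.mul_left _)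
  calc ∫ x in Ioi (0 : ℝ), x ^ p * exp (-x / r) * ∑' k : ℕ, a k * x ^ k
      = ∫ x in Ioi (0 : ℝ), ∑' k : ℕ, F k x := by
        refine setIntegral_congr_fun measurableSet_Ioi fun x hx => ?_
        rw [← tsum_mul_left]
        refine tsum_congr fun k => ?_
        simp only [F]
        rw [rpow_add hx, rpow_natCast]
        ring
    _ = ∑' k : ℕ, ∫ x in Ioi (0 : ℝ), F k x :=
        (integral_tsum_of_summable_integral_norm hF hF_summable).symm
    _ = _ := by
        simp_rw [hF_integral]
        exact tsum_mul_left

lemma summable_of_succ_eq_mul_of_tendsto {f r : ℕ → ℝ} {l : ℝ} (hf : ∀ k, f (k + 1) = r k * f k)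
    (hr : Tendsto r atTop (𝓝 l)) (hl : |l| < 1) : Summable f := by
  refine summable_of_ratio_norm_eventually_le (r := (|l| + 1) / 2) (by linarith) ?_
  have hr_le : ∀ᶠ k in atTop, |r k| ≤ (|l| + 1) / 2 :=
    hr.abs.eventually (eventually_le_nhds (by linarith))
  filter_upwards [hr_le] with k hk
  rw [hf, norm_mul, Real.norm_eq_abs (r k)]
  exact mul_le_mul_of_nonneg_right hk (norm_nonneg _)

lemma tendsto_add_natCast_div_natCast_add_one (a : ℝ) :
    Tendsto (fun k : ℕ => (a + k) / (k + 1)) atTop (𝓝 1) := by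
  have h := (tendsto_one_div_add_atTop_nhds_zero_nat.const_mul (a - 1)).const_add 1
  rw [mul_zero, add_zero] at h
  refine h.congr fun k => ?_
  field_simp
  ring

lemma summable_pochhammer'_div_factorial_sq_mul_pow (m t : ℝ) :
    Summable fun k : ℕ => pochhammer' m k / ((k.factorial : ℝ)) ^ 2 * t ^ k := by
  refine summable_of_succ_eq_mul_of_tendsto
    (r := fun k : ℕ => t * ((m + k) / (k + 1)) * (1 / (k + 1))) (fun k => ?_) ?_
    (by simp : |t * 1 * 0| < 1)
  · have := k.factorial_pos
    simp only [pochhammer', Nat.factorial_succ, pow_succ]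
    push_cast
    field_simp
  · exact (tendsto_const_nhds.mul (tendsto_add_natCast_div_natCast_add_one m)).mul
      tendsto_one_div_add_atTop_nhds_zero_nat

lemma summable_pochhammer'_mul_pochhammer'_div_factorial_sq_mul_pow (a m : ℝ) {q : ℝ}
    (hq : |q| < 1) :
    Summable fun k : ℕ =>
      pochhammer' a k * pochhammer' m k / ((k.factorial : ℝ)) ^ 2 * q ^ k := by
  refine summable_of_succ_eq_mul_of_tendsto
    (r := fun k : ℕ => q * ((a + k) / (k + 1)) * ((m + k) / (k + 1))) (fun k => ?_) ?_
    (by simpa using hq)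
  · have := k.factorial_pos
    simp only [pochhammer', Nat.factorial_succ, pow_succ]
    push_cast
    field_simp
  · simpa using (tendsto_const_nhds.mul (tendsto_add_natCast_div_natCast_add_one a)).mul
      (tendsto_add_natCast_div_natCast_add_one m)

/-- The `s`-th moment of the shadowed Rician power distribution: for `b > 0`, `m > 0`, `Ω ≥ 0`
and `s > −2`,
`∫_0^∞ x^{s/2} (2bm/(2bm+Ω))^m (e^{−x/(2b)}/(2b)) ₁F₁(m;1;Ωx/(2b(2bm+Ω))) dx
  = (2bm/(2bm+Ω))^m (2b)^{s/2} Γ(s/2+1) ₂F₁(s/2+1, m; 1; Ω/(2bm+Ω))`,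
with both hypergeometric series (written out as power series) convergent. -/
theorem shadowed_rician_moment (b m Ωr s : ℝ) (hb : 0 < b) (hm : 0 < m) (hΩ : 0 ≤ Ωr)
    (hs : -2 < s) :
    (∀ x > (0 : ℝ), Summable fun k : ℕ =>
        (pochhammer' m k / ((k.factorial : ℝ)) ^ 2) *
          (Ωr * x / (2 * b * (2 * b * m + Ωr))) ^ k) ∧
    (Summable fun k : ℕ =>
        (pochhammer' (s / 2 + 1) k * pochhammer' m k / ((k.factorial : ℝ)) ^ 2) *
          (Ωr / (2 * b * m + Ωr)) ^ k) ∧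
    ∫ x in Set.Ioi (0 : ℝ),
        x ^ (s / 2) * ((2 * b * m / (2 * b * m + Ωr)) ^ m * (Real.exp (-x / (2 * b)) / (2 * b)) *
          ∑' k : ℕ, (pochhammer' m k / ((k.factorial : ℝ)) ^ 2) *
            (Ωr * x / (2 * b * (2 * b * m + Ωr))) ^ k) =
      (2 * b * m / (2 * b * m + Ωr)) ^ m * (2 * b) ^ (s / 2) * Real.Gamma (s / 2 + 1) *
        ∑' k : ℕ, (pochhammer' (s / 2 + 1) k * pochhammer' m k / ((k.factorial : ℝ)) ^ 2) *
          (Ωr / (2 * b * m + Ωr)) ^ k := by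
  set D := 2 * b * m + Ωr
  set q := Ωr / D
  set c := Ωr / (2 * b * D)
  set A := (2 * b * m / D) ^ m
  have hb2 : 0 < 2 * b := by linarith
  have hD : 0 < D := by positivity
  have hq : |q| < 1 := by
    rw [abs_of_nonneg (by positivity), div_lt_one hD]
    nlinarith
  have hc : c * (2 * b) = q := by simp only [c, q]; field_simp
  have hcoeff (k : ℕ) :
      pochhammer' m k / ((k.factorial : ℝ)) ^ 2 * c ^ k * pochhammer' (s / 2 + 1) k * (2 * b) ^ k =
        pochhammer' (s / 2 + 1) k * pochhammer' m k / ((k.factorial : ℝ)) ^ 2 * q ^ k := by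
    rw [← hc, mul_pow]
    ring
  have h₂F₁ := summable_pochhammer'_mul_pochhammer'_div_factorial_sq_mul_pow (s / 2 + 1) m hq
  refine ⟨fun x _ => summable_pochhammer'_div_factorial_sq_mul_pow m _, h₂F₁, ?_⟩
  calc ∫ x in Ioi (0 : ℝ), x ^ (s / 2) * (A * (exp (-x / (2 * b)) / (2 * b)) *
          ∑' k : ℕ, pochhammer' m k / ((k.factorial : ℝ)) ^ 2 * (Ωr * x / (2 * b * D)) ^ k)
      = A / (2 * b) * ∫ x in Ioi (0 : ℝ), x ^ (s / 2) * exp (-x / (2 * b)) *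
          ∑' k : ℕ, pochhammer' m k / ((k.factorial : ℝ)) ^ 2 * c ^ k * x ^ k := by
        rw [← integral_const_mul]
        refine setIntegral_congr_fun measurableSet_Ioi fun x _ => ?_
        simp_rw [show Ωr * x / (2 * b * D) = c * x by ring, mul_pow, ← mul_assoc]
        ring
    _ = A / (2 * b) * ((2 * b) ^ (s / 2 + 1) * Gamma (s / 2 + 1) * ∑' k : ℕ,
          pochhammer' (s / 2 + 1) k * pochhammer' m k / ((k.factorial : ℝ)) ^ 2 * q ^ k) := by
        rw [integral_rpow_mul_exp_neg_div_mul_tsum (by linarith) hb2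
          (by simpa only [hcoeff] using h₂F₁)]
        simp_rw [hcoeff]
    _ = _ := by
        rw [rpow_add_one hb2.ne']
        field_simp
end

section
/- Let 0 < q ≤ 1, η > 0, A₀ > 0, and define ξ(φ) = (1 − (1 − q²)·cos²φ)/q² for φ ∈ ℝ. Then ∫_0^{A₀} (η²/(2πq)) · ∫_{−π}^{π} h^{η²ξ(φ) − 1}/A₀^{η²ξ(φ)} dφ dh = 1. -/
open Real MeasureTheory intervalIntegral

/-!
Since `1 - (1 - q²) cos² φ = sin² φ + q² cos² φ`, the exponent `e(φ) = η² ξ(φ)` is a positive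
continuous function of `φ`. The integrand is nonnegative, so Fubini lets us integrate in `h`
first, where `∫₀^{A₀} h^{e-1} / A₀^e dh = 1/e`. What remains is
`(q²/η²) ∫_{-π}^{π} dφ / (sin² φ + q² cos² φ) = (q²/η²) (2π/q)`, the classical integral being
computed from a continuous branch of `arctan (tan φ / q) / q`.
-/

theorem sin_sq_add_mul_cos_sq_pos {a : ℝ} (ha : 0 < a) (x : ℝ) :
    0 < sin x ^ 2 + a * cos x ^ 2 := by
  -- `(sin² + a cos²)(1 + a) ≥ a (sin² + cos²) = a`
  nlinarith [sin_sq_add_cos_sq x, sq_nonneg (sin x), mul_nonneg ha.le (sq_nonneg (cos x)),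
    mul_nonneg (mul_nonneg ha.le ha.le) (sq_nonneg (cos x))]

theorem integral_rpow_sub_one_div_rpow {a e : ℝ} (ha : 0 < a) (he : 0 < e) :
    ∫ h in (0 : ℝ)..a, h ^ (e - 1) / a ^ e = e⁻¹ := by
  rw [intervalIntegral.integral_div, integral_rpow (Or.inl (by linarith)), sub_add_cancel,
    zero_rpow he.ne', sub_zero, div_div_cancel_left' (rpow_pos_of_pos ha e).ne']

theorem integral_integral_rpow_sub_one_div_rpow {a c d : ℝ} {e : ℝ → ℝ} (ha : 0 < a)
    (hcd : c ≤ d) (he : Continuous e) (he_pos : ∀ φ, 0 < e φ) :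
    ∫ h in (0 : ℝ)..a, ∫ φ in c..d, h ^ (e φ - 1) / a ^ e φ = ∫ φ in c..d, (e φ)⁻¹ := by
  have h_int : Integrable (fun p : ℝ × ℝ => p.1 ^ (e p.2 - 1) / a ^ e p.2)
      ((volume.restrict (Set.Ioc 0 a)).prod (volume.restrict (Set.Ioc c d))) := by
    have h_meas : Measurable fun p : ℝ × ℝ => p.1 ^ (e p.2 - 1) / a ^ e p.2 := by
      have := he.measurable
      fun_prop
    refine (integrable_prod_iff' h_meas.aestronglyMeasurable).2 ⟨?_, ?_⟩
    · refine .of_forall fun φ => ?_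
      dsimp only
      exact ((intervalIntegrable_rpow' (r := e φ - 1) (by linarith [he_pos φ])).1).div_const _
    · have h_norm : ∀ φ, ∫ h in Set.Ioc 0 a, ‖h ^ (e φ - 1) / a ^ e φ‖ = (e φ)⁻¹ := by
        intro φ
        rw [← integral_rpow_sub_one_div_rpow ha (he_pos φ), integral_of_le ha.le]
        refine setIntegral_congr_fun measurableSet_Ioc fun h hh => norm_of_nonneg ?_
        exact div_nonneg (rpow_nonneg hh.1.le _) (rpow_nonneg ha.le _)
      simp_rw [h_norm]
      exact (he.inv₀ fun φ => (he_pos φ).ne').integrableOn_Ioc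
  simp_rw [integral_of_le ha.le, integral_of_le hcd]
  rw [integral_integral_swap h_int]
  simp_rw [← integral_of_le ha.le, integral_rpow_sub_one_div_rpow ha (he_pos _)]

/-- `arctan (tan x / q) = x + arctan ((1 - q) sin x cos x / (q cos² x + sin² x))` away from the
poles of `tan`; the right-hand side is continuous on all of `ℝ`. -/
theorem hasDerivAt_antideriv_inv_sin_sq_add_sq_mul_cos_sq {q : ℝ} (hq : 0 < q) (x : ℝ) :
    HasDerivAt (fun x => (x + arctan ((1 - q) * sin x * cos x / (q * cos x ^ 2 + sin x ^ 2))) / q)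
      (sin x ^ 2 + q ^ 2 * cos x ^ 2)⁻¹ x := by
  have hD : q * cos x ^ 2 + sin x ^ 2 ≠ 0 := by
    rw [add_comm]
    exact (sin_sq_add_mul_cos_sq_pos hq x).ne'
  have hN' : HasDerivAt (fun x => (1 - q) * sin x * cos x)
      ((1 - q) * (cos x ^ 2 - sin x ^ 2)) x := by
    refine (((hasDerivAt_sin x).const_mul (1 - q)).mul (hasDerivAt_cos x)).congr_deriv ?_
    ring
  have hD' : HasDerivAt (fun x => q * cos x ^ 2 + sin x ^ 2)
      (2 * (1 - q) * sin x * cos x) x := by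
    refine ((((hasDerivAt_cos x).pow 2).const_mul q).add
      ((hasDerivAt_sin x).pow 2)).congr_deriv ?_
    ring
  refine (((hasDerivAt_id x).add (hN'.div hD' hD).arctan).div_const q).congr_deriv ?_
  simp only [Pi.div_apply]
  have hsc := sin_sq_add_cos_sq x
  have hE : sin x ^ 2 + q ^ 2 * cos x ^ 2 ≠ 0 := (sin_sq_add_mul_cos_sq_pos (pow_pos hq 2) x).ne'
  set s := sin x
  set c := cos x
  have h_one_add_sq : 1 + ((1 - q) * s * c / (q * c ^ 2 + s ^ 2)) ^ 2
      = (s ^ 2 + q ^ 2 * c ^ 2) / (q * c ^ 2 + s ^ 2) ^ 2 := by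
    field_simp
    linear_combination (q ^ 2 * c ^ 2 + s ^ 2) * hsc
  have h_wronskian : (1 - q) * (c ^ 2 - s ^ 2) * (q * c ^ 2 + s ^ 2)
      - (1 - q) * s * c * (2 * (1 - q) * s * c) = (1 - q) * (q * c ^ 2 - s ^ 2) := by
    linear_combination (1 - q) * (q * c ^ 2 - s ^ 2) * hsc
  rw [h_wronskian, h_one_add_sq]
  field_simp
  linear_combination q * hsc

theorem integral_inv_sin_sq_add_sq_mul_cos_sq {q : ℝ} (hq : 0 < q) :
    ∫ φ in (-π)..π, (sin φ ^ 2 + q ^ 2 * cos φ ^ 2)⁻¹ = 2 * π / q := by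
  have h_cont : Continuous fun φ => (sin φ ^ 2 + q ^ 2 * cos φ ^ 2)⁻¹ :=
    (by fun_prop : Continuous fun φ => sin φ ^ 2 + q ^ 2 * cos φ ^ 2).inv₀
      fun φ => (sin_sq_add_mul_cos_sq_pos (pow_pos hq 2) φ).ne'
  rw [integral_eq_sub_of_hasDerivAt
    (fun φ _ => hasDerivAt_antideriv_inv_sin_sq_add_sq_mul_cos_sq hq φ)
    (h_cont.intervalIntegrable _ _)]
  simp only [sin_neg, cos_neg, sin_pi, neg_zero, mul_zero, zero_mul, zero_div, arctan_zero,
    add_zero]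
  ring

theorem hoyt_pointing_error_density_integrates_to_one_general
    (q η A₀ : ℝ) (hq0 : 0 < q) (hη : 0 < η) (hA : 0 < A₀)
    (ξ : ℝ → ℝ) (hξ : ∀ φ, ξ φ = (1 - (1 - q ^ 2) * Real.cos φ ^ 2) / q ^ 2) :
    ∫ h in (0 : ℝ)..A₀, (η ^ 2 / (2 * π * q)) *
        ∫ φ in (-π)..π, h ^ (η ^ 2 * ξ φ - 1) / A₀ ^ (η ^ 2 * ξ φ) = 1 := by
  have hξ' : ∀ φ, ξ φ = (sin φ ^ 2 + q ^ 2 * cos φ ^ 2) / q ^ 2 := fun φ => by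
    rw [hξ φ]
    linear_combination (-sin_sq_add_cos_sq φ) / q ^ 2
  have h_exp_inv : ∀ φ, (η ^ 2 * ξ φ)⁻¹ = q ^ 2 / η ^ 2 * (sin φ ^ 2 + q ^ 2 * cos φ ^ 2)⁻¹ :=
    fun φ => by
      rw [hξ' φ]
      field_simp
  have h_exp_pos : ∀ φ, 0 < η ^ 2 * ξ φ := fun φ => by
    have := sin_sq_add_mul_cos_sq_pos (pow_pos hq0 2) φ
    rw [hξ' φ]
    positivity
  have h_exp_cont : Continuous fun φ => η ^ 2 * ξ φ := by
    simp_rw [hξ']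
    fun_prop
  rw [intervalIntegral.integral_const_mul, integral_integral_rpow_sub_one_div_rpow hA
    (by linarith [pi_pos]) h_exp_cont h_exp_pos]
  simp_rw [h_exp_inv]
  rw [intervalIntegral.integral_const_mul, integral_inv_sin_sq_add_sq_mul_cos_sq hq0]
  field_simp

/-- The generalized (Hoyt) pointing-error density
`f(h) = (η²/(2πq)) ∫_{−π}^{π} h^{η²ξ(φ)−1}/A₀^{η²ξ(φ)} dφ`, with
`ξ(φ) = (1 − (1 − q²)cos²φ)/q²`, integrates to one over `(0, A₀)`. -/
theorem hoyt_pointing_error_density_integrates_to_one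
    (q η A₀ : ℝ) (hq0 : 0 < q) (hq1 : q ≤ 1) (hη : 0 < η) (hA : 0 < A₀)
    (ξ : ℝ → ℝ) (hξ : ∀ φ, ξ φ = (1 - (1 - q ^ 2) * Real.cos φ ^ 2) / q ^ 2) :
    ∫ h in (0 : ℝ)..A₀, (η ^ 2 / (2 * π * q)) *
        ∫ φ in (-π)..π, h ^ (η ^ 2 * ξ φ - 1) / A₀ ^ (η ^ 2 * ξ φ) = 1 :=
  hoyt_pointing_error_density_integrates_to_one_general q η A₀ hq0 hη hA ξ hξ
end
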